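/- Let G be a group with an epimorphism ν: G ↠ ℤ^m, inducing ν^♯: Hom(ℤ^m, ℚ) ↪ Hom(G, ℚ) = H¹(G;ℚ). The assignment ν ↦ im(ν^♯) gives a bijection between epimorphisms G ↠ ℤ^m up to automorphisms of ℤ^m and m-dimensional ℚ-linear subspaces P of H¹(G;ℚ) such that P is spanned by the image of a rank-m quotient of the abelianization; when H₁(G;ℤ) ≅ ℤ^r is free, every m-dimensional ℚ-subspace of H¹(G;ℚ) ≅ ℚ^r arises this way. -/

import Mathlib

/-!
Precomposition with an epimorphism `ν : A ↠ ℤ^m` is injective on rational characters, so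
`P_ν ≅ Hom(ℤ^m, ℚ)` is `m`-dimensional. The subspace `P_ν` determines `ker ν`, since the
coordinates of `ν` are rational characters, and an epimorphism is determined by its kernel up
to an automorphism of the target.

Conversely, given an `m`-dimensional `P`, the evaluation map `A → P^*` (`P.subtype.flip`) has
finitely generated torsion-free, hence free, image `L`, of rank at most `dim P^* = m`. Every
character in `P` factors through `A ↠ L`, so `m ≤ rank L`; thus `L ≅ ℤ^m` and the epimorphism
`A ↠ L ≅ ℤ^m` realises `P`.
-/

/-- `H₁(G;ℤ)` of a group `G`: the abelianization, written additively. -/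
abbrev H1 (G : Type*) [Group G] : Type _ := Additive (Abelianization G)

/-- The pullback `ν^♯` on rational characters induced by `ν : H₁(G;ℤ) → ℤ^m`:
a `ℚ`-linear map `Hom(ℤ^m, ℚ) → Hom(H₁(G;ℤ), ℚ) = H¹(G;ℚ)`. -/
noncomputable def pullbackChar (G : Type*) [Group G] (m : ℕ)
    (ν : H1 G →ₗ[ℤ] (Fin m → ℤ)) :
    ((Fin m → ℤ) →ₗ[ℤ] ℚ) →ₗ[ℚ] (H1 G →ₗ[ℤ] ℚ) where
  toFun f := f.comp ν
  map_add' f g := by ext; simp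
  map_smul' c f := by ext; simp

open Module LinearMap Function

lemma exists_linearEquiv_comp_of_ker_eq {R M N₁ N₂ : Type*} [Ring R] [AddCommGroup M]
    [Module R M] [AddCommGroup N₁] [Module R N₁] [AddCommGroup N₂] [Module R N₂]
    {ν₁ : M →ₗ[R] N₁} {ν₂ : M →ₗ[R] N₂} (h₁ : Surjective ν₁) (h₂ : Surjective ν₂)
    (h : ker ν₁ = ker ν₂) : ∃ φ : N₁ ≃ₗ[R] N₂, ν₂ = φ.toLinearMap ∘ₗ ν₁ :=
  ⟨(ν₁.quotKerEquivOfSurjective h₁).symm ≪≫ₗ Submodule.quotEquivOfEq _ _ h ≪≫ₗ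
      ν₂.quotKerEquivOfSurjective h₂, by
    ext x
    simp⟩

lemma finrank_int_le_finrank_rat {V : Type*} [AddCommGroup V] [Module ℚ V]
    [FiniteDimensional ℚ V] (L : Submodule ℤ V) [Module.Free ℤ L] [Module.Finite ℤ L] :
    finrank ℤ L ≤ finrank ℚ V := by
  let c := Module.finBasis ℤ L
  have hℤ : LinearIndependent ℤ (fun i ↦ (c i : V)) :=
    c.linearIndependent.map' L.subtype L.ker_subtype
  simpa using ((LinearIndependent.iff_fractionRing ℤ ℚ).mp hℤ).fintype_card_le_finrank

section

variable {A B C : Type*} [AddCommGroup A] [AddCommGroup B] [AddCommGroup C]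

lemma finrank_rat_dual [Module.Free ℤ B] [Module.Finite ℤ B] :
    finrank ℚ (B →ₗ[ℤ] ℚ) = finrank ℤ B :=
  ((Module.finBasis ℤ B).constr ℚ).finrank_eq.symm.trans (finrank_fin_fun ℚ)

instance [Module.Finite ℤ A] : FiniteDimensional ℚ (A →ₗ[ℤ] ℚ) := by
  obtain ⟨n, f, hf⟩ := Module.Finite.exists_fin' ℤ A
  exact .of_injective (lcomp ℚ ℚ f) (lcomp_injective_of_surjective f hf)

lemma finrank_range_lcomp_of_surjective [Module.Free ℤ B] [Module.Finite ℤ B]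
    {ν : A →ₗ[ℤ] B} (hν : Surjective ν) :
    finrank ℚ (range (lcomp ℚ ℚ ν)) = finrank ℤ B := by
  rw [finrank_range_of_inj (lcomp_injective_of_surjective ν hν), finrank_rat_dual]

lemma range_lcomp_linearEquiv_comp (φ : B ≃ₗ[ℤ] C) (ν : A →ₗ[ℤ] B) :
    range (lcomp ℚ ℚ (φ.toLinearMap ∘ₗ ν)) = range (lcomp ℚ ℚ ν) := by
  have hφ : range (lcomp ℚ ℚ φ.toLinearMap) = ⊤ :=
    range_eq_top.2 fun g ↦ ⟨g ∘ₗ φ.symm.toLinearMap, by ext; simp⟩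
  exact range_comp_of_range_eq_top (lcomp ℚ ℚ ν) hφ

lemma ker_le_ker_of_range_lcomp_le {ι : Type*} {ν₁ : A →ₗ[ℤ] B} {ν₂ : A →ₗ[ℤ] (ι → ℤ)}
    (h : range (lcomp ℚ ℚ ν₂) ≤ range (lcomp ℚ ℚ ν₁)) : ker ν₁ ≤ ker ν₂ := by
  intro x hx
  ext i
  obtain ⟨f, hf⟩ := h ⟨Algebra.linearMap ℤ ℚ ∘ₗ proj i, rfl⟩
  have hfx : f (ν₁ x) = ν₂ x i := LinearMap.congr_fun hf x
  rw [mem_ker.1 hx, map_zero] at hfx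
  exact_mod_cast hfx.symm

lemma range_lcomp_eq_iff {ι : Type*} {ν₁ ν₂ : A →ₗ[ℤ] (ι → ℤ)} (h₁ : Surjective ν₁)
    (h₂ : Surjective ν₂) :
    range (lcomp ℚ ℚ ν₁) = range (lcomp ℚ ℚ ν₂) ↔
      ∃ φ : (ι → ℤ) ≃ₗ[ℤ] (ι → ℤ), ν₂ = φ.toLinearMap ∘ₗ ν₁ := by
  refine ⟨fun h ↦ exists_linearEquiv_comp_of_ker_eq h₁ h₂ ?_, ?_⟩
  · exact le_antisymm (ker_le_ker_of_range_lcomp_le h.ge) (ker_le_ker_of_range_lcomp_le h.le)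
  · rintro ⟨φ, rfl⟩
    exact (range_lcomp_linearEquiv_comp φ ν₁).symm

end

section

variable {A : Type*} [AddCommGroup A] (P : Submodule ℚ (A →ₗ[ℤ] ℚ))

lemma le_range_lcomp_rangeRestrict_flip_subtype :
    P ≤ range (lcomp ℚ ℚ P.subtype.flip.rangeRestrict) := fun f hf ↦
  ⟨(Dual.eval ℚ P ⟨f, hf⟩).restrictScalars ℤ ∘ₗ (range P.subtype.flip).subtype, rfl⟩

variable [Module.Finite ℤ A]

lemma finrank_range_flip_subtype : finrank ℤ (range P.subtype.flip) = finrank ℚ P := by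
  refine le_antisymm ?_ ?_
  · simpa [Subspace.dual_finrank_eq] using finrank_int_le_finrank_rat (range P.subtype.flip)
  · simpa [finrank_range_lcomp_of_surjective P.subtype.flip.surjective_rangeRestrict] using
      Submodule.finrank_mono (le_range_lcomp_rangeRestrict_flip_subtype P)

theorem exists_surjective_range_lcomp_eq {m : ℕ} (hP : finrank ℚ P = m) :
    ∃ ν : A →ₗ[ℤ] (Fin m → ℤ), Surjective ν ∧ range (lcomp ℚ ℚ ν) = P := by
  let ψ := (finBasisOfFinrankEq ℤ _ ((finrank_range_flip_subtype P).trans hP)).equivFun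
  refine ⟨ψ.toLinearMap ∘ₗ P.subtype.flip.rangeRestrict,
    ψ.surjective.comp P.subtype.flip.surjective_rangeRestrict, ?_⟩
  rw [range_lcomp_linearEquiv_comp]
  refine (Submodule.eq_of_le_of_finrank_eq (le_range_lcomp_rangeRestrict_flip_subtype P) ?_).symm
  rw [finrank_range_lcomp_of_surjective P.subtype.flip.surjective_rangeRestrict,
    finrank_range_flip_subtype]

end

/-- The Dwyer–Fried parametrization.  Let `G` be a group with `H₁(G;ℤ) ≅ ℤ^r` free.  The
assignment `ν ↦ P_ν = im(ν^♯) ⊆ H¹(G;ℚ)` sets up a bijective correspondence between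
epimorphisms `ν : H₁(G;ℤ) ↠ ℤ^m` up to automorphisms of `ℤ^m` and `m`-dimensional
`ℚ`-linear subspaces of `H¹(G;ℚ) ≅ ℚ^r`: the image `P_ν` is `m`-dimensional, every
`m`-dimensional subspace arises from some epimorphism, and two epimorphisms give the same
subspace iff they differ by an automorphism of `ℤ^m`. -/
theorem dwyer_fried_parametrization (G : Type*) [Group G] (r m : ℕ)
    (e : H1 G ≃ₗ[ℤ] (Fin r → ℤ)) :
    (∀ ν : H1 G →ₗ[ℤ] (Fin m → ℤ), Function.Surjective ν →
      Module.finrank ℚ (LinearMap.range (pullbackChar G m ν)) = m) ∧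
    (∀ P : Submodule ℚ (H1 G →ₗ[ℤ] ℚ), Module.finrank ℚ P = m →
      ∃ ν : H1 G →ₗ[ℤ] (Fin m → ℤ), Function.Surjective ν ∧
        LinearMap.range (pullbackChar G m ν) = P) ∧
    (∀ ν₁ ν₂ : H1 G →ₗ[ℤ] (Fin m → ℤ), Function.Surjective ν₁ → Function.Surjective ν₂ →
      (LinearMap.range (pullbackChar G m ν₁) = LinearMap.range (pullbackChar G m ν₂) ↔
        ∃ φ : (Fin m → ℤ) ≃ₗ[ℤ] (Fin m → ℤ), ν₂ = φ.toLinearMap.comp ν₁)) := by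
  have : Module.Finite ℤ (H1 G) := .equiv e.symm
  -- `pullbackChar G m ν` is definitionally `lcomp ℚ ℚ ν`.
  exact ⟨fun ν hν ↦ (finrank_range_lcomp_of_surjective hν).trans (finrank_fin_fun ℤ),
    fun P hP ↦ exists_surjective_range_lcomp_eq P hP,
    fun ν₁ ν₂ h₁ h₂ ↦ range_lcomp_eq_iff h₁ h₂⟩
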